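/- arXiv:2111.13990 — 12 statements merged into one kernel-verified Lean document; each statement's English description precedes it below -/
import Mathlib

section
/- Let X = (ℚ ∩ (0,1)) ∪ [2,3], regarded as a subspace of ℝ with the natural topology. Then X is a quasi Baire space (for every countable family of dense open subsets of X, the intersection of the family is nonempty), but X is not a Baire space (there exists a countable family of dense open subsets of X whose intersection is not dense in X). -/
open Set

/-- The set `(ℚ ∩ (0,1)) ∪ [2,3]` as a subset of `ℝ`. -/
def exampleSet : Set ℝ :=
  (Set.range ((↑) : ℚ → ℝ) ∩ Set.Ioo (0 : ℝ) 1) ∪ Set.Icc (2 : ℝ) 3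

/-!
`[2,3]` is an open subspace of `X` which is compact, hence Baire, so countably many dense open
subsets of `X` already meet inside it. On the other hand, no point of the countable open set
`ℚ ∩ (0,1)` is isolated, so the complements of its points are countably many dense open sets
whose intersection `[2,3]` misses the nonempty open set `ℚ ∩ (0,1)`.
-/

section General

variable {X Y : Type*} [TopologicalSpace X] [TopologicalSpace Y]

theorem IsOpenMap.sInter_nonempty_of_baireSpace [BaireSpace Y] [Nonempty Y] {f : Y → X}
    (hfo : IsOpenMap f) (hfc : Continuous f) {F : Set (Set X)} (hF : F.Countable)
    (hFod : ∀ U ∈ F, IsOpen U ∧ Dense U) : (⋂₀ F).Nonempty := by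
  have hdense : Dense (⋂ U ∈ F, f ⁻¹' U) :=
    dense_biInter_of_isOpen (fun U hU ↦ (hFod U hU).1.preimage hfc) hF
      (fun U hU ↦ (hFod U hU).2.preimage hfo)
  obtain ⟨y, hy⟩ := hdense.nonempty
  exact ⟨f y, fun U hU ↦ mem_iInter₂.1 hy U hU⟩

theorem exists_countable_isOpen_dense_sInter_eq_compl [T1Space X] {S : Set X}
    (hSc : S.Countable) (hS : ∀ x ∈ S, ¬IsOpen {x}) :
    ∃ F : Set (Set X), F.Countable ∧ (∀ U ∈ F, IsOpen U ∧ Dense U) ∧ ⋂₀ F = Sᶜ := by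
  refine ⟨(fun x ↦ {x}ᶜ) '' S, hSc.image _, ?_, ?_⟩
  · rintro _ ⟨x, hx, rfl⟩
    exact ⟨isOpen_compl_singleton, dense_compl_singleton_iff_not_open.2 (hS x hx)⟩
  · rw [sInter_image, ← compl_iUnion₂, biUnion_of_singleton]

end General

namespace exampleSet

theorem Icc_subset : Icc (2 : ℝ) 3 ⊆ exampleSet := fun _ ↦ Or.inr

theorem mem_Icc_iff {x : ℝ} (hx : x ∈ exampleSet) : x ∈ Icc (2 : ℝ) 3 ↔ 1 < x := by
  rcases hx with ⟨-, -, hx1⟩ | hx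
  · exact ⟨fun h ↦ by linarith [h.1], fun h ↦ by linarith⟩
  · exact ⟨fun h ↦ by linarith [h.1], fun _ ↦ hx⟩

theorem isOpenEmbedding_inclusion_Icc : Topology.IsOpenEmbedding (inclusion Icc_subset) := by
  refine ⟨Topology.IsEmbedding.inclusion Icc_subset, ?_⟩
  have : range (inclusion Icc_subset) = Subtype.val ⁻¹' Ioi (1 : ℝ) := by
    rw [range_inclusion]
    ext x
    exact mem_Icc_iff x.2
  exact this ▸ isOpen_Ioi.preimage continuous_subtype_val

/-- The points of `ℚ ∩ (0,1)`, seen in the subspace `exampleSet`. -/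
def ratPart : Set exampleSet := {x | (x : ℝ) < 1}

theorem isOpen_ratPart : IsOpen ratPart := isOpen_Iio.preimage continuous_subtype_val

theorem ratPart_nonempty : ratPart.Nonempty :=
  ⟨⟨1 / 2, Or.inl ⟨⟨1 / 2, by norm_num⟩, by norm_num, by norm_num⟩⟩,
    show (1 / 2 : ℝ) < 1 by norm_num⟩

theorem mem_ratPart_iff {x : exampleSet} :
    x ∈ ratPart ↔ (x : ℝ) ∈ range ((↑) : ℚ → ℝ) ∩ Ioo 0 1 := by
  rcases x with ⟨x, hx | hx⟩
  · exact ⟨fun _ ↦ hx, fun _ ↦ hx.2.2⟩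
  · exact ⟨fun h ↦ ((one_le_two.trans hx.1).not_gt h).elim, fun h ↦ h.2.2⟩

theorem countable_ratPart : ratPart.Countable :=
  ((countable_range _).preimage Subtype.val_injective).mono fun _ hx ↦ (mem_ratPart_iff.1 hx).1

theorem not_isOpen_singleton_of_mem_ratPart {x : exampleSet} (hx : x ∈ ratPart) :
    ¬IsOpen {x} := by
  obtain ⟨-, hx0, hx1⟩ := mem_ratPart_iff.1 hx
  have hx_closure : x ∈ closure {x}ᶜ := by
    refine Metric.mem_closure_iff.2 fun ε hε ↦ ?_
    obtain ⟨r, hr, hrx⟩ := exists_rat_btwn (max_lt hx0 (sub_lt_self (x : ℝ) hε))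
    have hrX : (r : ℝ) ∈ exampleSet :=
      Or.inl ⟨⟨r, rfl⟩, (le_max_left _ _).trans_lt hr, hrx.trans hx1⟩
    refine ⟨⟨r, hrX⟩, fun h ↦ hrx.ne (congrArg Subtype.val h), ?_⟩
    rw [Subtype.dist_eq, Real.dist_eq, abs_of_pos (sub_pos.2 hrx)]
    linarith [le_max_right 0 ((x : ℝ) - ε)]
  have := mem_closure_iff_nhdsWithin_neBot.1 hx_closure
  exact not_isOpen_singleton x

end exampleSet

theorem stmt1 :
    (∀ F : Set (Set ↥exampleSet), F.Countable → (∀ U ∈ F, IsOpen U ∧ Dense U) →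
      (⋂₀ F).Nonempty) ∧
    ¬ (∀ F : Set (Set ↥exampleSet), F.Countable → (∀ U ∈ F, IsOpen U ∧ Dense U) →
      Dense (⋂₀ F)) := by
  refine ⟨fun F hF hFod ↦ ?_, fun hBaire ↦ ?_⟩
  · have : Nonempty (Icc (2 : ℝ) 3) := ⟨⟨2, by norm_num⟩⟩
    have hIcc := exampleSet.isOpenEmbedding_inclusion_Icc
    exact hIcc.isOpenMap.sInter_nonempty_of_baireSpace hIcc.continuous hF hFod
  · obtain ⟨F, hF, hFod, hFS⟩ := exists_countable_isOpen_dense_sInter_eq_compl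
      exampleSet.countable_ratPart fun _ ↦ exampleSet.not_isOpen_singleton_of_mem_ratPart
    have hdense := hBaire F hF hFod
    rw [hFS, ← interior_eq_empty_iff_dense_compl, exampleSet.isOpen_ratPart.interior_eq]
      at hdense
    exact exampleSet.ratPart_nonempty.ne_empty hdense
end

section
/- Let X be a topological space and (Y, ρ) a metric space. Let U_{ℵ₀}(X,Y) be the set of continuous f : X → Y such that for every ε > 0 there exists a countable cover of X by clopen sets on each of which the oscillation of f is at most ε. Then U_{ℵ₀}(X,Y) is closed under uniform limits: if f : X → Y is continuous and for every ε > 0 there exists g ∈ U_{ℵ₀}(X,Y) with ρ(f(x), g(x)) < ε for all x ∈ X, then f ∈ U_{ℵ₀}(X,Y). -/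
open Set

/-- `f ∈ U_{ℵ₀}(X,Y)`: `f` is continuous and for every `ε > 0` there is a countable
clopen cover of `X` on each member of which the oscillation of `f` is at most `ε`. -/
def MemUCountable {X Y : Type*} [TopologicalSpace X] [MetricSpace Y] (f : X → Y) : Prop :=
  Continuous f ∧ ∀ ε : ℝ, 0 < ε → ∃ 𝒜 : Set (Set X), 𝒜.Countable ∧ ⋃₀ 𝒜 = Set.univ ∧
    ∀ A ∈ 𝒜, IsClopen A ∧ ∀ x ∈ A, ∀ y ∈ A, dist (f x) (f y) ≤ ε

theorem dist_le_of_forall_dist_le {X Y : Type*} [PseudoMetricSpace Y] {f g : X → Y}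
    {A : Set X} {δ η : ℝ} (hfg : ∀ x ∈ A, dist (f x) (g x) ≤ δ)
    (hg : ∀ x ∈ A, ∀ y ∈ A, dist (g x) (g y) ≤ η) :
    ∀ x ∈ A, ∀ y ∈ A, dist (f x) (f y) ≤ η + 2 * δ := by
  intro x hx y hy
  calc dist (f x) (f y) ≤ dist (f x) (g x) + dist (g x) (g y) + dist (g y) (f y) :=
        dist_triangle4 _ _ _ _
    _ ≤ δ + η + δ := by
        rw [dist_comm (g y)]
        gcongr
        exacts [hfg x hx, hg x hx y hy, hfg y hy]
    _ = η + 2 * δ := by ring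

theorem stmt2 {X Y : Type*} [TopologicalSpace X] [MetricSpace Y] (f : X → Y)
    (hf : Continuous f)
    (h : ∀ ε : ℝ, 0 < ε → ∃ g : X → Y, MemUCountable g ∧ ∀ x : X, dist (f x) (g x) < ε) :
    MemUCountable f := by
  refine ⟨hf, fun ε hε => ?_⟩
  obtain ⟨g, ⟨-, hg⟩, hfg⟩ := h (ε / 4) (by positivity)
  obtain ⟨𝒜, h𝒜_countable, h𝒜_cover, h𝒜⟩ := hg (ε / 2) (by positivity)
  refine ⟨𝒜, h𝒜_countable, h𝒜_cover, fun A hA => ⟨(h𝒜 A hA).1, ?_⟩⟩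
  have hosc := dist_le_of_forall_dist_le (fun x _ => (hfg x).le) (h𝒜 A hA).2
  exact fun x hx y hy => (hosc x hx y hy).trans_eq (by ring)
end

section
/- Let X be a topological space and let f : X → ℝ be a continuous function such that for every ε > 0 there exists a countable cover of X by clopen sets on each of which the oscillation of f is at most ε (i.e., f ∈ U_{ℵ₀}(X)). Then the zero-set Z(f) = f⁻¹({0}) is the intersection of a countable family of clopen subsets of X. -/
/-!
A point `x` with `f x ≠ 0` lies in a member of the `ε`-cover for some `ε < |f x|`, and that
member misses `Z(f)`. So `Z(f)` is the intersection of the complements of all members of the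
`1/(n+1)`-covers that miss it, countably many clopen sets.
-/

open Set

lemma disjoint_preimage_zero_of_abs_sub_le {X : Type*} {f : X → ℝ} {A : Set X} {ε : ℝ}
    (hA : ∀ x ∈ A, ∀ y ∈ A, |f x - f y| ≤ ε) {x : X} (hx : x ∈ A) (hε : ε < |f x|) :
    Disjoint A (f ⁻¹' {0}) := by
  refine disjoint_left.mpr fun y hy hy0 => ?_
  have hfy : f y = 0 := hy0
  have := hA x hx y hy
  rw [hfy, sub_zero] at this
  linarith

lemma eq_sInter_compl_of_forall_notMem {α : Type*} {s : Set α} {𝒜 : Set (Set α)}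
    (h : ∀ x ∉ s, ∃ A ∈ 𝒜, x ∈ A ∧ Disjoint A s) :
    s = ⋂₀ (compl '' {A ∈ 𝒜 | Disjoint A s}) := by
  refine Subset.antisymm ?_ fun x hx => ?_
  · rintro x hx _ ⟨A, ⟨-, hAs⟩, rfl⟩
    exact disjoint_right.mp hAs hx
  · by_contra hxs
    obtain ⟨A, hA, hxA, hAs⟩ := h x hxs
    exact hx Aᶜ ⟨A, ⟨hA, hAs⟩, rfl⟩ hxA

theorem stmt4_general {X : Type*} [TopologicalSpace X] (f : X → ℝ)
    (h : ∀ ε : ℝ, 0 < ε → ∃ 𝒜 : Set (Set X), 𝒜.Countable ∧ ⋃₀ 𝒜 = Set.univ ∧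
      ∀ A ∈ 𝒜, IsClopen A ∧ ∀ x ∈ A, ∀ y ∈ A, |f x - f y| ≤ ε) :
    ∃ 𝒞 : Set (Set X), 𝒞.Countable ∧ (∀ A ∈ 𝒞, IsClopen A) ∧ f ⁻¹' {0} = ⋂₀ 𝒞 := by
  choose F hc hu hp using fun n : ℕ => h (1 / (n + 1)) (by positivity)
  set 𝒜 := {A ∈ ⋃ n, F n | Disjoint A (f ⁻¹' {0})}
  refine ⟨compl '' 𝒜, ((countable_iUnion hc).mono (sep_subset _ _)).image _, ?_,
    eq_sInter_compl_of_forall_notMem fun x hx => ?_⟩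
  · rintro _ ⟨A, ⟨hA, -⟩, rfl⟩
    obtain ⟨n, hn⟩ := mem_iUnion.mp hA
    exact (hp n A hn).1.compl
  · obtain ⟨n, hn⟩ := exists_nat_one_div_lt (abs_pos.mpr hx)
    obtain ⟨A, hA, hxA⟩ := mem_sUnion.mp ((hu n).symm ▸ mem_univ x)
    exact ⟨A, mem_iUnion.mpr ⟨n, hA⟩, hxA,
      disjoint_preimage_zero_of_abs_sub_le (hp n A hA).2 hxA hn⟩

theorem stmt4 {X : Type*} [TopologicalSpace X] (f : X → ℝ) (hf : Continuous f)
    (h : ∀ ε : ℝ, 0 < ε → ∃ 𝒜 : Set (Set X), 𝒜.Countable ∧ ⋃₀ 𝒜 = Set.univ ∧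
      ∀ A ∈ 𝒜, IsClopen A ∧ ∀ x ∈ A, ∀ y ∈ A, |f x - f y| ≤ ε) :
    ∃ 𝒞 : Set (Set X), 𝒞.Countable ∧ (∀ A ∈ 𝒞, IsClopen A) ∧ f ⁻¹' {0} = ⋂₀ 𝒞 :=
  stmt4_general f h
end

section
/- Let X be a topological space and f : X → ℝ a continuous function. The following are equivalent: (a) for every open set O ⊆ ℝ, the preimage f⁻¹(O) is a union of countably many clopen subsets of X (i.e., f ∈ A(X)); (b) for every ε > 0 there exists a countable cover of X by clopen sets on each of which the oscillation of f is at most ε (i.e., f ∈ U_{ℵ₀}(X)); (c) for every ε > 0 there exists a locally constant function g : X → ℝ with |f(x) − g(x)| ≤ ε for all x ∈ X. -/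
/-!
Preimages of the rational intervals `(q, q + ε)` give a countable clopen cover of oscillation `≤ ε`;
conversely each point of `f ⁻¹' O` lies in a piece of a fine enough cover, and that piece lies
inside `f ⁻¹' O`. Disjointifying an enumerated countable clopen cover and picking one value of `f`
per piece gives a locally constant approximation. The fibres of a locally constant approximation
`g` may be uncountably many, so one passes to the fibres of the `ℤ`-valued map `⌊g / δ⌋` instead.
-/

open Set

section

variable {X : Type*} [TopologicalSpace X]

def IsCountableUnionOfClopens (U : Set X) : Prop :=
  ∃ 𝒰 : Set (Set X), 𝒰.Countable ∧ (∀ A ∈ 𝒰, IsClopen A) ∧ U = ⋃₀ 𝒰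

def HasCountableClopenCoverOscLE (f : X → ℝ) (ε : ℝ) : Prop :=
  ∃ 𝒜 : Set (Set X), 𝒜.Countable ∧ ⋃₀ 𝒜 = univ ∧
    ∀ A ∈ 𝒜, IsClopen A ∧ ∀ x ∈ A, ∀ y ∈ A, |f x - f y| ≤ ε

theorem hasCountableClopenCoverOscLE_of_preimage {f : X → ℝ}
    (hf : ∀ O : Set ℝ, IsOpen O → IsCountableUnionOfClopens (f ⁻¹' O)) {ε : ℝ} (hε : 0 < ε) :
    HasCountableClopenCoverOscLE f ε := by
  choose 𝒰 h𝒰c h𝒰cl h𝒰 using fun q : ℚ => hf (Ioo (q : ℝ) (q + ε)) isOpen_Ioo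
  have mem_𝒰 : ∀ (q : ℚ) x, x ∈ f ⁻¹' Ioo (q : ℝ) (q + ε) ↔ ∃ A ∈ 𝒰 q, x ∈ A := fun q x => by
    rw [h𝒰 q, mem_sUnion]
  refine ⟨⋃ q, 𝒰 q, countable_iUnion h𝒰c, eq_univ_of_forall fun x => ?_, fun A hA => ?_⟩
  · obtain ⟨q, hq₁, hq₂⟩ := exists_rat_btwn (sub_lt_self (f x) hε)
    obtain ⟨A, hA, hxA⟩ := (mem_𝒰 q x).1 ⟨hq₂, by linarith⟩
    exact ⟨A, mem_iUnion.2 ⟨q, hA⟩, hxA⟩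
  · obtain ⟨q, hAq⟩ := mem_iUnion.1 hA
    refine ⟨h𝒰cl q A hAq, fun x hx y hy => ?_⟩
    obtain ⟨hx₁, hx₂⟩ := (mem_𝒰 q x).2 ⟨A, hAq, hx⟩
    obtain ⟨hy₁, hy₂⟩ := (mem_𝒰 q y).2 ⟨A, hAq, hy⟩
    rw [abs_le]
    constructor <;> linarith

theorem isCountableUnionOfClopens_preimage {f : X → ℝ}
    (hf : ∀ ε : ℝ, 0 < ε → HasCountableClopenCoverOscLE f ε) {O : Set ℝ} (hO : IsOpen O) :
    IsCountableUnionOfClopens (f ⁻¹' O) := by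
  choose 𝒜 h𝒜c h𝒜 h𝒜cl using fun n : ℕ => hf (1 / ((n : ℝ) + 1)) Nat.one_div_pos_of_nat
  refine ⟨{A | ∃ n, A ∈ 𝒜 n ∧ A ⊆ f ⁻¹' O}, ?_, ?_, ?_⟩
  · exact (countable_iUnion h𝒜c).mono fun A ⟨n, hA, _⟩ => mem_iUnion.2 ⟨n, hA⟩
  · rintro A ⟨n, hA, -⟩
    exact (h𝒜cl n A hA).1
  refine Subset.antisymm (fun x hx => ?_) fun x ⟨A, ⟨_, _, hAO⟩, hxA⟩ => hAO hxA
  obtain ⟨δ, hδ, hball⟩ := Metric.isOpen_iff.1 hO (f x) hx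
  obtain ⟨n, hn⟩ := exists_nat_one_div_lt hδ
  obtain ⟨A, hA, hxA⟩ := mem_sUnion.1 ((h𝒜 n).symm ▸ mem_univ x)
  refine ⟨A, ⟨n, hA, fun y hy => hball ?_⟩, hxA⟩
  rw [Metric.mem_ball, Real.dist_eq]
  exact ((h𝒜cl n A hA).2 y hy x hxA).trans_lt hn

theorem exists_isLocallyConstant_mem_of_clopen_cover_nat {e : ℕ → Set X}
    (he : ∀ n, IsClopen (e n)) (hcov : ∀ x, ∃ n, x ∈ e n) :
    ∃ i : X → ℕ, IsLocallyConstant i ∧ ∀ x, x ∈ e (i x) := by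
  classical
  refine ⟨fun x => Nat.find (hcov x), IsLocallyConstant.iff_isOpen_fiber.2 fun n => ?_,
    fun x => Nat.find_spec (hcov x)⟩
  have : (fun x => Nat.find (hcov x)) ⁻¹' {n} = e n ∩ ⋂ m ∈ Iio n, (e m)ᶜ := by
    ext x
    simp [Nat.find_eq_iff]
  rw [this]
  exact (he n).isOpen.inter <| (finite_Iio n).isOpen_biInter fun m _ => (he m).isClosed.isOpen_compl

theorem exists_isLocallyConstant_mem_of_countable_clopen_cover {𝒜 : Set (Set X)}
    (h𝒜c : 𝒜.Countable) (h𝒜 : ⋃₀ 𝒜 = univ) (h𝒜cl : ∀ A ∈ 𝒜, IsClopen A) :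
    ∃ r : X → Set X, IsLocallyConstant r ∧ ∀ x, r x ∈ 𝒜 ∧ x ∈ r x := by
  rcases 𝒜.eq_empty_or_nonempty with rfl | hne
  · refine ⟨fun _ => ∅, IsLocallyConstant.const _, fun x => ?_⟩
    simpa using h𝒜.ge (mem_univ x)
  obtain ⟨e, rfl⟩ := h𝒜c.exists_eq_range hne
  obtain ⟨i, hi, hxi⟩ := exists_isLocallyConstant_mem_of_clopen_cover_nat
    (fun n => h𝒜cl _ (mem_range_self n)) fun x => by simpa using h𝒜.ge (mem_univ x)
  exact ⟨e ∘ i, hi.comp e, fun x => ⟨mem_range_self _, hxi x⟩⟩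

theorem exists_isLocallyConstant_approx {f : X → ℝ} {ε : ℝ}
    (hf : HasCountableClopenCoverOscLE f ε) :
    ∃ g : X → ℝ, IsLocallyConstant g ∧ ∀ x, |f x - g x| ≤ ε := by
  classical
  obtain ⟨𝒜, h𝒜c, h𝒜, h𝒜cl⟩ := hf
  obtain ⟨r, hr, hrx⟩ :=
    exists_isLocallyConstant_mem_of_countable_clopen_cover h𝒜c h𝒜 fun A hA => (h𝒜cl A hA).1
  let value : Set X → ℝ := fun A => if h : A.Nonempty then f h.some else 0
  refine ⟨value ∘ r, hr.comp value, fun x => ?_⟩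
  have hne : (r x).Nonempty := ⟨x, (hrx x).2⟩
  simpa [value, hne] using (h𝒜cl _ (hrx x).1).2 x (hrx x).2 _ hne.some_mem

theorem hasCountableClopenCoverOscLE_of_isLocallyConstant {Y : Type*} [Countable Y]
    {f : X → ℝ} {ε : ℝ} {k : X → Y} (hk : IsLocallyConstant k)
    (hfk : ∀ x y, k x = k y → |f x - f y| ≤ ε) : HasCountableClopenCoverOscLE f ε := by
  refine ⟨range fun y => k ⁻¹' {y}, countable_range _, ?_, ?_⟩
  · exact eq_univ_of_forall fun x => ⟨_, ⟨k x, rfl⟩, rfl⟩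
  · rintro _ ⟨y, rfl⟩
    exact ⟨hk.isClopen_fiber y, fun x hx x' hx' => hfk x x' (hx.trans hx'.symm)⟩

theorem hasCountableClopenCoverOscLE_of_approx {f g : X → ℝ} {δ : ℝ} (hδ : 0 < δ)
    (hg : IsLocallyConstant g) (hfg : ∀ x, |f x - g x| ≤ δ) :
    HasCountableClopenCoverOscLE f (3 * δ) := by
  refine hasCountableClopenCoverOscLE_of_isLocallyConstant (k := fun x => ⌊g x / δ⌋)
    (hg.comp fun t => ⌊t / δ⌋) fun x y hxy => ?_
  have hgxy : |g x - g y| < δ := by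
    have := Int.abs_sub_lt_one_of_floor_eq_floor hxy
    rwa [← sub_div, abs_div, abs_of_pos hδ, div_lt_one hδ] at this
  calc |f x - f y| = |(f x - g x) + (g x - g y) + (g y - f y)| := by ring_nf
    _ ≤ |f x - g x| + |g x - g y| + |g y - f y| := abs_add_three _ _ _
    _ ≤ 3 * δ := by linarith [hfg x, abs_sub_comm (f y) (g y) ▸ hfg y]

end

theorem stmt5_general {X : Type*} [TopologicalSpace X] (f : X → ℝ) :
    ((∀ O : Set ℝ, IsOpen O → ∃ 𝒰 : Set (Set X), 𝒰.Countable ∧ (∀ A ∈ 𝒰, IsClopen A) ∧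
        f ⁻¹' O = ⋃₀ 𝒰) ↔
      (∀ ε : ℝ, 0 < ε → ∃ 𝒜 : Set (Set X), 𝒜.Countable ∧ ⋃₀ 𝒜 = Set.univ ∧
        ∀ A ∈ 𝒜, IsClopen A ∧ ∀ x ∈ A, ∀ y ∈ A, |f x - f y| ≤ ε)) ∧
    ((∀ ε : ℝ, 0 < ε → ∃ 𝒜 : Set (Set X), 𝒜.Countable ∧ ⋃₀ 𝒜 = Set.univ ∧
        ∀ A ∈ 𝒜, IsClopen A ∧ ∀ x ∈ A, ∀ y ∈ A, |f x - f y| ≤ ε) ↔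
      (∀ ε : ℝ, 0 < ε → ∃ g : X → ℝ, IsLocallyConstant g ∧ ∀ x : X, |f x - g x| ≤ ε)) := by
  refine ⟨⟨fun ha _ => hasCountableClopenCoverOscLE_of_preimage ha,
    fun hb _ => isCountableUnionOfClopens_preimage hb⟩,
    ⟨fun hb ε hε => exists_isLocallyConstant_approx (hb ε hε), fun hc ε hε => ?_⟩⟩
  obtain ⟨g, hg, hfg⟩ := hc (ε / 3) (by positivity)
  have hcover := hasCountableClopenCoverOscLE_of_approx (by positivity) hg hfg
  rwa [mul_div_cancel₀ ε three_ne_zero] at hcover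

theorem stmt5 {X : Type*} [TopologicalSpace X] (f : X → ℝ) (hf : Continuous f) :
    ((∀ O : Set ℝ, IsOpen O → ∃ 𝒰 : Set (Set X), 𝒰.Countable ∧ (∀ A ∈ 𝒰, IsClopen A) ∧
        f ⁻¹' O = ⋃₀ 𝒰) ↔
      (∀ ε : ℝ, 0 < ε → ∃ 𝒜 : Set (Set X), 𝒜.Countable ∧ ⋃₀ 𝒜 = Set.univ ∧
        ∀ A ∈ 𝒜, IsClopen A ∧ ∀ x ∈ A, ∀ y ∈ A, |f x - f y| ≤ ε)) ∧
    ((∀ ε : ℝ, 0 < ε → ∃ 𝒜 : Set (Set X), 𝒜.Countable ∧ ⋃₀ 𝒜 = Set.univ ∧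
        ∀ A ∈ 𝒜, IsClopen A ∧ ∀ x ∈ A, ∀ y ∈ A, |f x - f y| ≤ ε) ↔
      (∀ ε : ℝ, 0 < ε → ∃ g : X → ℝ, IsLocallyConstant g ∧ ∀ x : X, |f x - g x| ≤ ε)) :=
  stmt5_general f
end

section
/- Let X be a completely regular topological space such that for every continuous f : X → ℝ and every open O ⊆ ℝ, the preimage f⁻¹(O) is a union of countably many clopen subsets of X (i.e., A(X) = C(X)). Then X is strongly zero-dimensional: for every pair Z₁, Z₂ of disjoint zero-sets in X there exists a clopen set U of X with Z₁ ⊆ U ⊆ X \ Z₂. -/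
open Set TopologicalSpace

theorem stmt6 {X : Type*} [TopologicalSpace X]
    -- `X` is completely regular: the co-zero sets form a base of `X`
    (hcr : IsTopologicalBasis {U : Set X | ∃ f : X → ℝ, Continuous f ∧ U = (f ⁻¹' {0})ᶜ})
    -- `A(X) = C(X)`: preimages of open subsets of `ℝ` under continuous functions are
    -- countable unions of clopen sets
    (hA : ∀ f : X → ℝ, Continuous f → ∀ O : Set ℝ, IsOpen O →
      ∃ 𝒰 : Set (Set X), 𝒰.Countable ∧ (∀ A ∈ 𝒰, IsClopen A) ∧ f ⁻¹' O = ⋃₀ 𝒰) :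
    -- `X` is strongly zero-dimensional
    ∀ f g : X → ℝ, Continuous f → Continuous g → Disjoint (f ⁻¹' {0}) (g ⁻¹' {0}) →
      ∃ U : Set X, IsClopen U ∧ f ⁻¹' {0} ⊆ U ∧ U ⊆ (g ⁻¹' {0})ᶜ := by
  classical
  intro f g hf hg hd
  rw [Set.disjoint_left] at hd
  -- the denominator is positive everywhere
  have hpos : ∀ x, 0 < |f x| + |g x| := by
    intro x
    rcases lt_or_eq_of_le (add_nonneg (abs_nonneg (f x)) (abs_nonneg (g x))) with h | h
    · exact h
    · exfalso
      have h1 : |f x| = 0 ∧ |g x| = 0 := by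
        constructor <;> nlinarith [abs_nonneg (f x), abs_nonneg (g x)]
      exact hd (by simpa using abs_eq_zero.mp h1.1) (by simpa using abs_eq_zero.mp h1.2)
  set h : X → ℝ := fun x => |f x| / (|f x| + |g x|) with hhdef
  have hcont : Continuous h :=
    (continuous_abs.comp hf).div ((continuous_abs.comp hf).add (continuous_abs.comp hg))
      (fun x => (hpos x).ne')
  have hz1 : ∀ x, f x = 0 → h x = 0 := by
    intro x hx; simp [hhdef, hx]
  have hz2 : ∀ x, g x = 0 → h x = 1 := by
    intro x hx
    have hfx : f x ≠ 0 := fun h0 => hd (by simpa using h0) (by simpa using hx)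
    have : |f x| ≠ 0 := abs_ne_zero.mpr hfx
    simp [hhdef, hx]
    exact hfx
  obtain ⟨𝒰, h𝒰c, h𝒰clo, h𝒰eq⟩ := hA h hcont (Iio (1/2)) isOpen_Iio
  obtain ⟨𝒱, h𝒱c, h𝒱clo, h𝒱eq⟩ := hA h hcont (Ioi (1/3)) isOpen_Ioi
  -- enumerate all clopens together with ∅
  obtain ⟨W, hW⟩ := ((h𝒰c.union h𝒱c).insert ∅).exists_eq_range ⟨∅, mem_insert _ _⟩
  have hWmem : ∀ n, W n ∈ insert (∅ : Set X) (𝒰 ∪ 𝒱) := by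
    intro n; rw [hW]; exact mem_range_self n
  have hWclo : ∀ n, IsClopen (W n) := by
    intro n
    rcases hWmem n with h0 | h0
    · rw [h0]; exact isClopen_empty
    · rcases h0 with h1 | h1
      · exact h𝒰clo _ h1
      · exact h𝒱clo _ h1
  have hWside : ∀ n, W n ⊆ h ⁻¹' Iio (1/2) ∨ W n ⊆ h ⁻¹' Ioi (1/3) := by
    intro n
    rcases hWmem n with h0 | h0
    · left; rw [h0]; exact empty_subset _
    · rcases h0 with h1 | h1
      · left; rw [h𝒰eq]; exact subset_sUnion_of_mem h1
      · right; rw [h𝒱eq]; exact subset_sUnion_of_mem h1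
  have hWcover : ∀ x : X, ∃ n, x ∈ W n := by
    intro x
    rcases lt_or_ge (h x) (1/2) with hx | hx
    · have : x ∈ ⋃₀ 𝒰 := by rw [← h𝒰eq]; exact hx
      obtain ⟨A, hA1, hA2⟩ := this
      have : A ∈ range W := by rw [← hW]; exact mem_insert_of_mem _ (Or.inl hA1)
      obtain ⟨n, rfl⟩ := this
      exact ⟨n, hA2⟩
    · have hx' : (1:ℝ)/3 < h x := by linarith
      have : x ∈ ⋃₀ 𝒱 := by rw [← h𝒱eq]; exact hx'
      obtain ⟨A, hA1, hA2⟩ := this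
      have : A ∈ range W := by rw [← hW]; exact mem_insert_of_mem _ (Or.inr hA1)
      obtain ⟨n, rfl⟩ := this
      exact ⟨n, hA2⟩
  -- disjointify
  set C : ℕ → Set X := fun n => W n \ ⋃ m ∈ Finset.range n, W m with hCdef
  have hCclo : ∀ n, IsClopen (C n) := by
    intro n
    have : IsClopen (⋃ m ∈ Finset.range n, W m) :=
      isClopen_biUnion_finset (fun m _ => hWclo m)
    exact (hWclo n).diff this
  have hCsub : ∀ n, C n ⊆ W n := fun n => diff_subset
  have hCcover : ∀ x : X, ∃ n, x ∈ C n := by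
    intro x
    have hx := hWcover x
    refine ⟨Nat.find hx, Nat.find_spec hx, ?_⟩
    simp only [Finset.mem_range, mem_iUnion]
    rintro ⟨m, hm, hxm⟩
    exact Nat.find_min hx hm hxm
  have hCdisj : ∀ m n, m ≠ n → ∀ x, x ∈ C m → x ∈ C n → False := by
    have key : ∀ m n, m < n → ∀ x, x ∈ C m → x ∈ C n → False := by
      intro m n hmn x hxm hxn
      exact hxn.2 (mem_iUnion₂.mpr ⟨m, Finset.mem_range.mpr hmn, hxm.1⟩)
    intro m n hmn x hxm hxn
    rcases hmn.lt_or_gt with h' | h'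
    · exact key m n h' x hxm hxn
    · exact key n m h' x hxn hxm
  set S : Set ℕ := {n | W n ⊆ h ⁻¹' Iio (1/2)} with hSdef
  set U : Set X := ⋃ n ∈ S, C n with hUdef
  have hUopen : IsOpen U := isOpen_biUnion fun n _ => (hCclo n).isOpen
  have hUcomp : Uᶜ = ⋃ n ∈ Sᶜ, C n := by
    ext x
    simp only [mem_compl_iff, hUdef, mem_iUnion]
    constructor
    · intro hx
      obtain ⟨n, hn⟩ := hCcover x
      refine ⟨n, fun hnS => hx ⟨n, hnS, hn⟩, hn⟩
    · rintro ⟨n, hnS, hxn⟩ ⟨m, hmS, hxm⟩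
      rcases eq_or_ne m n with rfl | hmn
      · exact hnS hmS
      · exact hCdisj m n hmn x hxm hxn
  have hUclosed : IsClosed U := by
    rw [← isOpen_compl_iff, hUcomp]
    exact isOpen_biUnion fun n _ => (hCclo n).isOpen
  refine ⟨U, ⟨hUclosed, hUopen⟩, ?_, ?_⟩
  · intro x hx
    have hx0 : h x = 0 := hz1 x hx
    obtain ⟨n, hn⟩ := hCcover x
    have hnS : n ∈ S := by
      rcases hWside n with h1 | h1
      · exact h1
      · exfalso
        have := h1 (hCsub n hn)
        simp only [mem_preimage, mem_Ioi, hx0] at this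
        linarith
    exact mem_iUnion₂.mpr ⟨n, hnS, hn⟩
  · intro x hx
    simp only [mem_compl_iff, mem_preimage, mem_singleton_iff]
    intro hgx
    have hx1 : h x = 1 := hz2 x hgx
    obtain ⟨n, hnS, hxn⟩ := mem_iUnion₂.mp hx
    have := hnS (hCsub n hxn)
    simp only [mem_preimage, mem_Iio, hx1] at this
    linarith
end

section
/- Let X be a zero-dimensional topological space (the clopen sets form a base) such that U_{ℵ₀}(X) is separable in the uniform metric: there exists a countable set D ⊆ U_{ℵ₀}(X) such that for every f ∈ U_{ℵ₀}(X) and every ε > 0 there exists g ∈ D with |f(x) − g(x)| < ε for all x ∈ X. Then X is second-countable. -/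
/-!
For a clopen `U`, the indicator `𝟙_U` lies in `U_{ℵ₀}(X)`, so some `g ∈ D` is uniformly
`1/3`-close to it. Any member `A` of a countable clopen cover on which `g` oscillates by at
most `1/4` and which meets `U` is then contained in `U`, since `g` is `> 2/3` on `U` and `< 1/3`
off it. Hence the members of these covers, over all `g ∈ D`, form a countable base.
-/

open Set TopologicalSpace

/-- `f ∈ U_{ℵ₀}(X)`: `f : X → ℝ` is continuous and for every `ε > 0` there is a countable
clopen cover of `X` on each member of which the oscillation of `f` is at most `ε`. -/
def MemUCountableReal {X : Type*} [TopologicalSpace X] (f : X → ℝ) : Prop :=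
  Continuous f ∧ ∀ ε : ℝ, 0 < ε → ∃ 𝒜 : Set (Set X), 𝒜.Countable ∧ ⋃₀ 𝒜 = Set.univ ∧
    ∀ A ∈ 𝒜, IsClopen A ∧ ∀ x ∈ A, ∀ y ∈ A, |f x - f y| ≤ ε

theorem memUCountableReal_indicator_one {X : Type*} [TopologicalSpace X] {U : Set X}
    (hU : IsClopen U) : MemUCountableReal (U.indicator 1 : X → ℝ) := by
  refine ⟨continuous_indicator (by simp [hU]) continuous_const.continuousOn,
    fun ε hε => ⟨{U, Uᶜ}, (countable_singleton _).insert U, by simp, ?_⟩⟩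
  rintro A (rfl | rfl)
  · exact ⟨hU, fun x hx y hy => by simp [hx, hy, hε.le]⟩
  · exact ⟨hU.compl, fun x hx y hy => by simp_all [hε.le]⟩

theorem mem_of_abs_indicator_one_sub_lt {X : Type*} {U : Set X} {g : X → ℝ}
    (hg : ∀ z, |U.indicator 1 z - g z| < 1 / 3) {x y : X} (hx : x ∈ U)
    (hxy : |g x - g y| ≤ 1 / 4) : y ∈ U := by
  by_contra hy
  have hgx := hg x
  have hgy := hg y
  rw [indicator_of_mem hx, Pi.one_apply] at hgx
  rw [indicator_of_notMem hy] at hgy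
  obtain ⟨-, hgx⟩ := abs_lt.mp hgx
  obtain ⟨hgy, -⟩ := abs_lt.mp hgy
  linarith [(abs_le.mp hxy).2]

theorem stmt7 {X : Type*} [TopologicalSpace X]
    -- `X` is zero-dimensional: the clopen sets form a base
    (hzd : IsTopologicalBasis {U : Set X | IsClopen U})
    -- `U_{ℵ₀}(X)` is separable in the uniform metric
    (D : Set (X → ℝ)) (hDcount : D.Countable) (hDU : ∀ g ∈ D, MemUCountableReal g)
    (hDdense : ∀ f : X → ℝ, MemUCountableReal f → ∀ ε : ℝ, 0 < ε →
      ∃ g ∈ D, ∀ x : X, |f x - g x| < ε) :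
    SecondCountableTopology X := by
  choose! 𝒜 h𝒜count h𝒜cover h𝒜osc using fun g hg => (hDU g hg).2 (1 / 4) (by norm_num)
  refine IsTopologicalBasis.secondCountableTopology (b := ⋃ g ∈ D, 𝒜 g) ?_
    (hDcount.biUnion h𝒜count)
  refine isTopologicalBasis_of_isOpen_of_nhds ?_ fun x u hxu hu => ?_
  · simp only [mem_iUnion₂]
    rintro A ⟨g, hg, hA⟩
    exact (h𝒜osc g hg A hA).1.isOpen
  obtain ⟨U, hU, hxU, hUu⟩ := hzd.exists_subset_of_mem_open hxu hu
  obtain ⟨g, hg, hgU⟩ :=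
    hDdense _ (memUCountableReal_indicator_one hU) (1 / 3) (by norm_num)
  obtain ⟨A, hA, hxA⟩ := (h𝒜cover g hg).symm ▸ mem_univ x
  refine ⟨A, mem_biUnion hg hA, hxA, fun y hy => hUu ?_⟩
  exact mem_of_abs_indicator_one_sub_lt hgU hxU ((h𝒜osc g hg A hA).2 x hxA y hy)
end

section
/- If a topological space X has a countable base consisting of clopen sets, then X is strongly zero-dimensional. Moreover, every zero-dimensional Lindelöf space is strongly zero-dimensional. -/
/-!
A clopen set is the co-zero set of its indicator, so a clopen base is a co-zero base.
To separate disjoint closed sets `Z₁`, `Z₂`, cover the space by clopen sets each missing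
`Z₁` or `Z₂`, pass to a countable subcover `Dₙ` (Lindelöf) and disjointify it to
`Eₙ = Dₙ \ ⋃_{k<n} D_k`. The union of those `Eₙ` with `Dₙ ∩ Z₂ = ∅` is open, and closed
because its complement is the union of the remaining `Eₙ`; it contains `Z₁` and misses `Z₂`.
A countable clopen base makes the space second countable, hence Lindelöf.
-/

open Set TopologicalSpace

/-- `X` is strongly zero-dimensional: `X` is completely regular (the co-zero sets form a
base) and every pair of disjoint zero-sets is separated by a clopen set. -/
def StronglyZeroDimensional (X : Type*) [TopologicalSpace X] : Prop :=
  IsTopologicalBasis {U : Set X | ∃ f : X → ℝ, Continuous f ∧ U = (f ⁻¹' {0})ᶜ} ∧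
  ∀ f g : X → ℝ, Continuous f → Continuous g → Disjoint (f ⁻¹' {0}) (g ⁻¹' {0}) →
    ∃ U : Set X, IsClopen U ∧ f ⁻¹' {0} ⊆ U ∧ U ⊆ (g ⁻¹' {0})ᶜ

section

open Function

variable {X : Type*} [TopologicalSpace X]

theorem IsClopen.exists_continuous_compl_preimage_zero {C : Set X} (hC : IsClopen C) :
    ∃ f : X → ℝ, Continuous f ∧ C = (f ⁻¹' {0})ᶜ :=
  ⟨C.indicator 1, hC.continuous_indicator continuous_const, by
    ext x; by_cases hx : x ∈ C <;> simp [hx]⟩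

theorem TopologicalSpace.IsTopologicalBasis.cozero_of_isClopen
    (hB : IsTopologicalBasis {U : Set X | IsClopen U}) :
    IsTopologicalBasis {U : Set X | ∃ f : X → ℝ, Continuous f ∧ U = (f ⁻¹' {0})ᶜ} :=
  hB.of_isOpen_of_subset
    (by rintro _ ⟨f, hf, rfl⟩; exact (isClosed_singleton.preimage hf).isOpen_compl)
    fun _ hC ↦ hC.exists_continuous_compl_preimage_zero

theorem IsClopen.disjointed {D : ℕ → Set X} (hD : ∀ n, IsClopen (D n)) (n : ℕ) :
    IsClopen (disjointed D n) :=
  disjointedRec (fun _ i ht ↦ ht.diff (hD i)) (hD n)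

theorem isClopen_biUnion_of_pairwise_disjoint_cover {ι : Type*} {E : ι → Set X}
    (hE : ∀ i, IsOpen (E i)) (hdisj : Pairwise (Disjoint on E)) (hcover : ⋃ i, E i = univ)
    (S : Set ι) : IsClopen (⋃ i ∈ S, E i) := by
  have hcompl : IsCompl (⋃ i ∈ S, E i) (⋃ i ∈ Sᶜ, E i) := by
    refine ⟨?_, codisjoint_iff.mpr ?_⟩
    · simp only [disjoint_iUnion_left, disjoint_iUnion_right]
      exact fun _ hj _ hi ↦ hdisj (ne_of_mem_of_not_mem hi hj)
    · change (⋃ i ∈ S, E i) ∪ ⋃ i ∈ Sᶜ, E i = univ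
      rw [← biUnion_union, union_compl_self, biUnion_univ, hcover]
  refine ⟨?_, isOpen_biUnion fun i _ ↦ hE i⟩
  rw [← isOpen_compl_iff, hcompl.compl_eq]
  exact isOpen_biUnion fun i _ ↦ hE i

theorem exists_isClopen_of_isClosed_of_disjoint [LindelofSpace X]
    (hB : IsTopologicalBasis {U : Set X | IsClopen U}) {Z₁ Z₂ : Set X}
    (h₁ : IsClosed Z₁) (h₂ : IsClosed Z₂) (hd : Disjoint Z₁ Z₂) :
    ∃ U : Set X, IsClopen U ∧ Z₁ ⊆ U ∧ Disjoint U Z₂ := by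
  let ι := {C : Set X // IsClopen C ∧ (Disjoint C Z₁ ∨ Disjoint C Z₂)}
  have : Nonempty ι := ⟨⟨∅, isClopen_empty, .inl (empty_disjoint _)⟩⟩
  have hnhds : ∀ {Z : Set X}, IsClosed Z → ∀ x ∉ Z, ∃ C, IsClopen C ∧ x ∈ C ∧ Disjoint C Z :=
    fun hZ x hx ↦
      let ⟨C, hC, hxC, hCZ⟩ := hB.exists_subset_of_mem_open hx hZ.isOpen_compl
      ⟨C, hC, hxC, subset_compl_iff_disjoint_right.mp hCZ⟩
  have hcover : univ ⊆ ⋃ C : ι, C.1 := fun x _ ↦ by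
    by_cases hx : x ∈ Z₁
    · obtain ⟨C, hC, hxC, hCZ⟩ := hnhds h₂ x (disjoint_left.mp hd hx)
      exact mem_iUnion.mpr ⟨⟨C, hC, .inr hCZ⟩, hxC⟩
    · obtain ⟨C, hC, hxC, hCZ⟩ := hnhds h₁ x hx
      exact mem_iUnion.mpr ⟨⟨C, hC, .inl hCZ⟩, hxC⟩
  obtain ⟨f, hf⟩ := isLindelof_univ.indexed_countable_subcover (fun C : ι ↦ C.1)
    (fun C ↦ C.2.1.isOpen) hcover
  set D : ℕ → Set X := fun n ↦ (f n).1
  have hE : ⋃ n, disjointed D n = univ := iUnion_disjointed.trans (univ_subset_iff.mp hf)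
  have hEopen : ∀ n, IsOpen (disjointed D n) :=
    fun n ↦ (IsClopen.disjointed (fun n ↦ (f n).2.1) n).isOpen
  refine ⟨⋃ n ∈ {n | Disjoint (D n) Z₂}, disjointed D n,
    isClopen_biUnion_of_pairwise_disjoint_cover hEopen (disjoint_disjointed D) hE _,
    fun x hx ↦ ?_, ?_⟩
  · obtain ⟨n, hxn⟩ := iUnion_eq_univ_iff.mp hE x
    have hnZ₁ : ¬Disjoint (D n) Z₁ := fun h ↦ disjoint_left.mp h (disjointed_subset D n hxn) hx
    exact mem_biUnion ((f n).2.2.resolve_left hnZ₁) hxn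
  · simp only [disjoint_iUnion_left]
    exact fun n hn ↦ hn.mono_left (disjointed_subset D n)

theorem StronglyZeroDimensional.of_isTopologicalBasis_isClopen [LindelofSpace X]
    (hB : IsTopologicalBasis {U : Set X | IsClopen U}) : StronglyZeroDimensional X := by
  refine ⟨hB.cozero_of_isClopen, fun f g hf hg hd ↦ ?_⟩
  obtain ⟨U, hU, hfU, hUg⟩ := exists_isClopen_of_isClosed_of_disjoint hB
    (isClosed_singleton.preimage hf) (isClosed_singleton.preimage hg) hd
  exact ⟨U, hU, hfU, hUg.subset_compl_right⟩

end

theorem stmt8 :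
    (∀ (X : Type*) [TopologicalSpace X],
      (∃ B : Set (Set X), B.Countable ∧ (∀ U ∈ B, IsClopen U) ∧ IsTopologicalBasis B) →
      StronglyZeroDimensional X) ∧
    (∀ (X : Type*) [TopologicalSpace X],
      IsTopologicalBasis {U : Set X | IsClopen U} → LindelofSpace X →
      StronglyZeroDimensional X) := by
  refine ⟨?_, fun X _ hB _ ↦ .of_isTopologicalBasis_isClopen hB⟩
  rintro X _ ⟨B, hBc, hBcl, hB⟩
  have : SecondCountableTopology X := hB.secondCountableTopology hBc
  exact .of_isTopologicalBasis_isClopen (hB.of_isOpen_of_subset (fun _ hU ↦ hU.isOpen) hBcl)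
end

section
/- Every zero-dimensional subspace of ℝ is strongly zero-dimensional. -/
/-!
The indicator of a clopen set is continuous, so clopen sets are co-zero sets. Subspaces of `ℝ`
are Lindelöf: given disjoint closed `A`, `B`, cover the space by clopen sets each missing `A` or
`B`, pass to a countable subcover `W₀, W₁, …` and disjointify it to `Wₙ \ ⋃_{m<n} Wₘ`. These
pieces are clopen and partition the space, so the union of those missing `B` is clopen, and it
contains `A`.
-/

open Set TopologicalSpace Function

section ZeroDimensional

variable {X : Type*} [TopologicalSpace X]

theorem IsClopen.exists_continuous_eq_compl_preimage_zero {U : Set X} (hU : IsClopen U) :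
    ∃ f : X → ℝ, Continuous f ∧ U = (f ⁻¹' {0})ᶜ := by
  refine ⟨U.indicator 1, hU.continuous_indicator continuous_const, ?_⟩
  ext x
  by_cases hx : x ∈ U <;> simp [hx]

theorem TopologicalSpace.IsTopologicalBasis.cozeroSets_of_clopens
    (h : IsTopologicalBasis {U : Set X | IsClopen U}) :
    IsTopologicalBasis {U : Set X | ∃ f : X → ℝ, Continuous f ∧ U = (f ⁻¹' {0})ᶜ} :=
  h.of_isOpen_of_subset
    (by rintro _ ⟨f, hf, rfl⟩; exact (isClosed_singleton.preimage hf).isOpen_compl)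
    fun _ hU => hU.exists_continuous_eq_compl_preimage_zero

theorem isClopen_biUnion_of_pairwise_disjoint {ι : Type*} {D : ι → Set X}
    (hD : ∀ i, IsOpen (D i)) (hdisj : Pairwise (Disjoint on D)) (hcov : ⋃ i, D i = univ)
    (S : Set ι) : IsClopen (⋃ i ∈ S, D i) := by
  refine ⟨?_, isOpen_biUnion fun i _ => hD i⟩
  have hcompl : (⋃ i ∈ S, D i)ᶜ = ⋃ i ∈ Sᶜ, D i := by
    ext x
    obtain ⟨j, hxj⟩ := mem_iUnion.1 (hcov ▸ mem_univ x : x ∈ ⋃ i, D i)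
    have huniq : ∀ i, x ∈ D i → i = j := fun i hxi =>
      by_contra fun hij => (hdisj hij).le_bot ⟨hxi, hxj⟩
    simp only [mem_compl_iff, mem_iUnion, exists_prop, not_exists, not_and]
    constructor
    · exact fun h => ⟨j, fun hj => h j hj hxj, hxj⟩
    · rintro ⟨i, hiS, hxi⟩ k hkS hxk
      exact hiS (huniq i hxi ▸ huniq k hxk ▸ hkS)
  rw [← isOpen_compl_iff, hcompl]
  exact isOpen_biUnion fun i _ => hD i

theorem exists_isClopen_between_of_nat_cover {A B : Set X} {W : ℕ → Set X}
    (hW : ∀ n, IsClopen (W n)) (hcov : ⋃ n, W n = univ)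
    (hsep : ∀ n, Disjoint (W n) A ∨ Disjoint (W n) B) :
    ∃ U : Set X, IsClopen U ∧ A ⊆ U ∧ U ⊆ Bᶜ := by
  have hD : ∀ n, IsClopen (disjointed W n) :=
    fun n => disjointedRec (fun _ i ht => ht.diff (hW i)) (hW n)
  refine ⟨⋃ n ∈ {n | Disjoint (disjointed W n) B}, disjointed W n,
    isClopen_biUnion_of_pairwise_disjoint (fun n => (hD n).isOpen) (disjoint_disjointed W)
      (iUnion_disjointed.trans hcov) _, fun x hxA => ?_,
    iUnion₂_subset fun n hn => hn.subset_compl_right⟩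
  obtain ⟨n, hxn⟩ := mem_iUnion.1 (iUnion_disjointed.trans hcov ▸ mem_univ x)
  have hWB : Disjoint (W n) B :=
    (hsep n).resolve_left fun hWA => hWA.le_bot ⟨disjointed_subset W n hxn, hxA⟩
  exact mem_biUnion (hWB.mono_left (disjointed_subset W n)) hxn

theorem exists_isClopen_between_of_isTopologicalBasis_clopens [LindelofSpace X]
    (h : IsTopologicalBasis {U : Set X | IsClopen U}) {A B : Set X} (hA : IsClosed A)
    (hB : IsClosed B) (hAB : Disjoint A B) : ∃ U : Set X, IsClopen U ∧ A ⊆ U ∧ U ⊆ Bᶜ := by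
  rcases isEmpty_or_nonempty X with hX | hX
  · exact ⟨∅, isClopen_empty, by simp [eq_empty_of_isEmpty A], empty_subset _⟩
  have hloc : ∀ x, ∃ W : Set X, IsClopen W ∧ x ∈ W ∧ (Disjoint W A ∨ Disjoint W B) := by
    intro x
    by_cases hxA : x ∈ A
    · obtain ⟨W, hW, hxW, hWB⟩ :=
        h.exists_subset_of_mem_open (hAB.notMem_of_mem_left hxA) hB.isOpen_compl
      exact ⟨W, hW, hxW, .inr (subset_compl_iff_disjoint_right.1 hWB)⟩
    · obtain ⟨W, hW, hxW, hWA⟩ := h.exists_subset_of_mem_open hxA hA.isOpen_compl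
      exact ⟨W, hW, hxW, .inl (subset_compl_iff_disjoint_right.1 hWA)⟩
  choose W hW hxW hsep using hloc
  obtain ⟨t, htc, htcov⟩ :=
    LindelofSpace.elim_nhds_subcover W fun x => (hW x).isOpen.mem_nhds (hxW x)
  obtain ⟨e, hte⟩ := countable_iff_exists_subset_range.1 htc
  have hcov : ⋃ n, W (e n) = univ := by
    refine eq_univ_of_forall fun x => ?_
    obtain ⟨y, hyt, hxy⟩ := mem_iUnion₂.1 (htcov ▸ mem_univ x)
    obtain ⟨n, rfl⟩ := hte hyt
    exact mem_iUnion.2 ⟨n, hxy⟩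
  exact exists_isClopen_between_of_nat_cover (fun n => hW (e n)) hcov fun n => hsep (e n)

end ZeroDimensional

theorem stmt10 (X : Set ℝ)
    -- the subspace `X` of `ℝ` is zero-dimensional: its clopen sets form a base
    (hzd : IsTopologicalBasis {U : Set ↥X | IsClopen U}) :
    -- `X` is strongly zero-dimensional: it is completely regular (the co-zero sets
    -- form a base) and disjoint zero-sets are separated by clopen sets
    IsTopologicalBasis {U : Set ↥X | ∃ f : ↥X → ℝ, Continuous f ∧ U = (f ⁻¹' {0})ᶜ} ∧
    ∀ f g : ↥X → ℝ, Continuous f → Continuous g → Disjoint (f ⁻¹' {0}) (g ⁻¹' {0}) →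
      ∃ U : Set ↥X, IsClopen U ∧ f ⁻¹' {0} ⊆ U ∧ U ⊆ (g ⁻¹' {0})ᶜ :=
  ⟨hzd.cozeroSets_of_clopens, fun _ _ hf hg hdisj =>
    exists_isClopen_between_of_isTopologicalBasis_clopens hzd
      (isClosed_singleton.preimage hf) (isClosed_singleton.preimage hg) hdisj⟩
end

section
/- Every T₁ limit point compact P-space is finite: if X is a T₁ topological space in which every countable intersection of open sets is open and every infinite subset of X has an accumulation point in X, then X is finite. -/
open Set Filter

/-- `X` is a P-space: every countable intersection of open sets is open. -/
def IsPSpace (X : Type*) [TopologicalSpace X] : Prop :=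
  ∀ F : Set (Set X), F.Countable → (∀ U ∈ F, IsOpen U) → IsOpen (⋂₀ F)

theorem stmt14 {X : Type*} [TopologicalSpace X] [T1Space X] (hP : IsPSpace X)
    -- `X` is limit point compact: every infinite subset has an accumulation point
    (hlpc : ∀ S : Set X, S.Infinite → ∃ x : X, AccPt x (𝓟 S)) :
    Finite X := by
  by_contra hfin
  have : Infinite X := not_finite_iff_infinite.mp hfin
  have f := Infinite.natEmbedding X
  set S : Set X := Set.range f with hS
  have hSinf : S.Infinite := Set.infinite_range_of_injective f.injective
  obtain ⟨a, ha⟩ := hlpc S hSinf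
  set F : Set (Set X) := (fun s => ({s}ᶜ : Set X)) '' (S \ {a}) with hF
  have hFc : F.Countable :=
    (((Set.countable_range f).mono (Set.diff_subset)).image _)
  have hFo : ∀ U ∈ F, IsOpen U := by
    rintro U ⟨s, -, rfl⟩
    exact isOpen_compl_singleton
  have hU : IsOpen (⋂₀ F) := hP F hFc hFo
  have haU : a ∈ ⋂₀ F := by
    rintro U ⟨s, hs, rfl⟩
    exact fun h => hs.2 (by simpa using h.symm)
  obtain ⟨y, ⟨hyU, hyS⟩, hya⟩ := (accPt_iff_nhds : AccPt a (𝓟 S) ↔ _).mp (by simpa using ha)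
    (⋂₀ F) (hU.mem_nhds haU)
  exact hyU ({y}ᶜ) ⟨y, ⟨hyS, hya⟩, rfl⟩ rfl
end

section
/- Let X and Y be topological spaces such that Y is not countably compact (there exists a countable open cover of Y with no finite subcover). If the projection π_X : X × Y → X is a closed map, then X is a P-space. -/
/-!
Given open sets `U₀ ⊇ U₁ ⊇ ⋯` in `X` and an increasing open cover `W₀ ⊆ W₁ ⊆ ⋯` of `Y` with no
`Wₙ = Y`, the open set `E = ⋃ₙ Uₙ × Wₙ` contains the whole fibre `{x} × Y` exactly when
`x ∈ ⋂ₙ Uₙ`: if `x ∉ Uₘ`, the fibre can only meet the pieces with `n < m`, so it would lie in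
`X × Wₘ`. Hence `⋂ₙ Uₙ` is the complement of the projection of the closed set `Eᶜ`, which is
closed when the projection is a closed map. Taking finite intersections, resp. finite unions,
reduces a countable family of open sets, resp. a countable cover without finite subcover, to
sequences of this shape.
-/

open Set

theorem isPSpace_of_isOpen_iInter_of_antitone {X : Type*} [TopologicalSpace X]
    (h : ∀ U : ℕ → Set X, (∀ n, IsOpen (U n)) → Antitone U → IsOpen (⋂ n, U n)) :
    IsPSpace X := by
  intro F hFc hFo
  rcases F.eq_empty_or_nonempty with rfl | hFne
  · simp
  obtain ⟨U, rfl⟩ := hFc.exists_eq_range hFne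
  have hUo (n : ℕ) : IsOpen (U n) := hFo _ (mem_range_self n)
  rw [sInter_range, ← iInter_dissipate]
  exact h _ (fun n => (finite_Iic n).isOpen_biInter fun k _ => hUo k) antitone_dissipate

theorem exists_monotone_open_cover_ne_univ {Y : Type*} [TopologicalSpace Y]
    {𝒰 : Set (Set Y)} (h𝒰c : 𝒰.Countable) (h𝒰o : ∀ U ∈ 𝒰, IsOpen U) (h𝒰cov : ⋃₀ 𝒰 = univ)
    (h𝒰nf : ¬ ∃ F : Set (Set Y), F ⊆ 𝒰 ∧ F.Finite ∧ ⋃₀ F = univ) :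
    ∃ W : ℕ → Set Y, (∀ n, IsOpen (W n)) ∧ Monotone W ∧ ⋃ n, W n = univ ∧ ∀ n, W n ≠ univ := by
  have h𝒰ne : 𝒰.Nonempty :=
    nonempty_iff_ne_empty.2 fun h => h𝒰nf ⟨∅, empty_subset _, finite_empty, h ▸ h𝒰cov⟩
  obtain ⟨V, rfl⟩ := h𝒰c.exists_eq_range h𝒰ne
  refine ⟨accumulate V, fun n => isOpen_biUnion fun k _ => h𝒰o _ (mem_range_self k),
    monotone_accumulate, by rwa [iUnion_accumulate, ← sUnion_range], fun n hn => h𝒰nf ?_⟩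
  refine ⟨V '' Iic n, image_subset_range _ _, (finite_Iic n).image V, ?_⟩
  rwa [sUnion_image]

theorem IsClosedMap.isOpen_iInter_of_fst {X Y : Type*} [TopologicalSpace X]
    [TopologicalSpace Y] (hproj : IsClosedMap (Prod.fst : X × Y → X))
    {U : ℕ → Set X} (hUo : ∀ n, IsOpen (U n)) (hU : Antitone U)
    {W : ℕ → Set Y} (hWo : ∀ n, IsOpen (W n)) (hW : Monotone W) (hWcov : ⋃ n, W n = univ)
    (hWne : ∀ n, W n ≠ univ) :
    IsOpen (⋂ n, U n) := by
  set E : Set (X × Y) := ⋃ n, U n ×ˢ W n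
  have hE : IsOpen E := isOpen_iUnion fun n => (hUo n).prod (hWo n)
  suffices ⋂ n, U n = (Prod.fst '' Eᶜ)ᶜ by
    rw [this]
    exact (hproj _ hE.isClosed_compl).isOpen_compl
  ext x
  have hfibre : x ∈ (Prod.fst '' Eᶜ)ᶜ ↔ ∀ y, (x, y) ∈ E := by
    simp only [mem_compl_iff, mem_image, Prod.exists, exists_and_right, exists_eq_right,
      not_exists, not_not]
  rw [hfibre, mem_iInter]
  constructor
  · intro hx y
    obtain ⟨n, hy⟩ := mem_iUnion.1 (hWcov ▸ mem_univ y)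
    exact mem_iUnion.2 ⟨n, hx n, hy⟩
  · intro hx m
    by_contra hxm
    refine hWne m (eq_univ_of_forall fun y => ?_)
    obtain ⟨n, hxn, hyn⟩ := mem_iUnion.1 (hx y)
    have hnm : n ≤ m := le_of_not_ge fun hmn => hxm (hU hmn hxn)
    exact hW hnm hyn

theorem stmt16 {X Y : Type*} [TopologicalSpace X] [TopologicalSpace Y]
    -- `Y` is not countably compact: some countable open cover has no finite subcover
    (hY : ∃ 𝒰 : Set (Set Y), 𝒰.Countable ∧ (∀ U ∈ 𝒰, IsOpen U) ∧ ⋃₀ 𝒰 = Set.univ ∧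
      ¬ ∃ F : Set (Set Y), F ⊆ 𝒰 ∧ F.Finite ∧ ⋃₀ F = Set.univ)
    (hproj : IsClosedMap (Prod.fst : X × Y → X)) :
    IsPSpace X := by
  obtain ⟨𝒰, h𝒰c, h𝒰o, h𝒰cov, h𝒰nf⟩ := hY
  obtain ⟨W, hWo, hW, hWcov, hWne⟩ := exists_monotone_open_cover_ne_univ h𝒰c h𝒰o h𝒰cov h𝒰nf
  exact isPSpace_of_isOpen_iInter_of_antitone fun U hUo hU =>
    hproj.isOpen_iInter_of_fst hUo hU hWo hW hWcov hWne
end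

section
/- Let X be a P-space and let Y be a topological space that is either Lindelöf or second-countable. Then the projection π_X : X × Y → X is a closed map. -/
/-! In a P-space every neighbourhood filter is closed under countable intersections. This is
exactly what the tube lemma needs once compactness of the second factor is weakened to the
Lindelöf property: a countable subcover of `Y` produces countably many neighbourhoods of `x`,
and their intersection is still a neighbourhood of `x`. -/

open Set

open Filter Topology

section

variable {X Y : Type*} [TopologicalSpace X] [TopologicalSpace Y]

theorem IsPSpace.countableInterFilter_nhds (hX : IsPSpace X) (x : X) :
    CountableInterFilter (𝓝 x) where
  countable_sInter_mem S hS hSx := by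
    have hopen : IsOpen (⋂₀ (interior '' S)) :=
      hX _ (hS.image _) (forall_mem_image.2 fun _ _ ↦ isOpen_interior)
    have hx : x ∈ ⋂₀ (interior '' S) :=
      mem_sInter.2 (forall_mem_image.2 fun s hs ↦ mem_interior_iff_mem_nhds.2 (hSx s hs))
    exact mem_of_superset (hopen.mem_nhds hx) <| subset_sInter fun s hs ↦
      (sInter_subset_of_mem (mem_image_of_mem _ hs)).trans interior_subset

theorem IsLindelof.eventually_forall_of_forall_eventually {x₀ : X} [CountableInterFilter (𝓝 x₀)]
    {K : Set Y} (hK : IsLindelof K) {P : X → Y → Prop}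
    (hP : ∀ y ∈ K, ∀ᶠ z : X × Y in 𝓝 (x₀, y), P z.1 z.2) :
    ∀ᶠ x in 𝓝 x₀, ∀ y ∈ K, P x y := by
  refine hK.induction_on (p := fun t ↦ ∀ᶠ x in 𝓝 x₀, ∀ y ∈ t, P x y)
    (fun s t hst ht ↦ ht.mono fun x hx y hy ↦ hx y (hst hy))
    (fun S hS hSP ↦ ?_) (fun y hy ↦ ?_)
  · filter_upwards [(eventually_countable_ball hS).2 hSP] with x hx y ⟨s, hs, hy⟩
    exact hx s hs y hy
  · obtain ⟨U, hU, V, hV, hUV⟩ := mem_nhds_prod_iff.1 (hP y hy)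
    exact ⟨V, mem_nhdsWithin_of_mem_nhds hV,
      mem_of_superset hU fun x hx y' hy' ↦ hUV (mk_mem_prod hx hy')⟩

theorem isClosedMap_fst_of_countableInterFilter_nhds [LindelofSpace Y]
    (hX : ∀ x : X, CountableInterFilter (𝓝 x)) : IsClosedMap (Prod.fst : X × Y → X) := by
  intro C hC
  refine isOpen_compl_iff.1 <| isOpen_iff_eventually.2 fun x hx ↦ ?_
  have hnot : ∀ y ∈ univ, ∀ᶠ z : X × Y in 𝓝 (x, y), z ∉ C := fun y _ ↦
    hC.isOpen_compl.mem_nhds fun h ↦ hx ⟨(x, y), h, rfl⟩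
  filter_upwards [isLindelof_univ.eventually_forall_of_forall_eventually
    (P := fun a b ↦ (a, b) ∉ C) hnot]
  rintro x' hx' ⟨⟨a, b⟩, hab, rfl⟩
  exact hx' b (mem_univ b) hab

end

theorem stmt17 {X Y : Type*} [TopologicalSpace X] [TopologicalSpace Y]
    (hX : IsPSpace X)
    (hY : LindelofSpace Y ∨ SecondCountableTopology Y) :
    IsClosedMap (Prod.fst : X × Y → X) := by
  have : LindelofSpace Y := hY.elim id fun _ ↦ inferInstance
  exact isClosedMap_fst_of_countableInterFilter_nhds hX.countableInterFilter_nhds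
end

section
/- Let X and Y be P-spaces and suppose that every point of X has a well-orderable base of neighborhoods, i.e., for every x ∈ X there is a neighborhood basis of x indexed by a well-ordered set. Then the product X × Y is a P-space. In particular, if X is a first-countable P-space and Y is a P-space, then X × Y is a P-space. -/
open Set Filter

universe u

/-- Every point of `X` has a neighborhood basis indexed by a well-ordered set. -/
def WellOrderableNhdsBases (X : Type u) [TopologicalSpace X] : Prop :=
  ∀ x : X, ∃ (ι : Type u) (r : ι → ι → Prop) (_ : IsWellOrder ι r) (W : ι → Set X),
    (∀ i : ι, W i ∈ nhds x) ∧ ∀ V ∈ nhds x, ∃ i : ι, W i ⊆ V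

/-! A space is a P-space exactly when every neighborhood filter is closed under countable
intersections, and this property passes to the product filter `𝓝 x ×ˢ 𝓝 y = 𝓝 (x, y)`:
a countable family of neighborhoods of `(x, y)` contains a countable family of boxes
`A i ×ˢ B i`, chosen simultaneously, and `(⋂ A i) ×ˢ (⋂ B i)` lies in their intersection. -/

instance Filter.countableInterFilter_prod {α β : Type*} (l : Filter α) (m : Filter β)
    [CountableInterFilter l] [CountableInterFilter m] : CountableInterFilter (l ×ˢ m) :=
  countableInterFilter_inf _ _

section

variable {X Y : Type*} [TopologicalSpace X] [TopologicalSpace Y]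

theorem isPSpace_iff_countableInterFilter_nhds :
    IsPSpace X ↔ ∀ x : X, CountableInterFilter (nhds x) := by
  constructor
  · refine fun hX x => ⟨fun S hSc hS => ?_⟩
    choose! U hUS hUo hxU using fun s hs => mem_nhds_iff.mp (hS s hs)
    have hopen : IsOpen (⋂₀ (U '' S)) := hX _ (hSc.image U) (forall_mem_image.mpr hUo)
    refine mem_nhds_iff.mpr ⟨⋂₀ (U '' S), ?_, hopen, ?_⟩
    · rw [sInter_image, sInter_eq_biInter]
      exact iInter₂_mono hUS
    · exact mem_sInter.mpr (forall_mem_image.mpr hxU)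
  · intro h F hFc hFo
    refine isOpen_iff_mem_nhds.mpr fun x hx => (countable_sInter_mem hFc).mpr fun U hU => ?_
    exact (hFo U hU).mem_nhds (hx U hU)

theorem IsPSpace.prod (hX : IsPSpace X) (hY : IsPSpace Y) : IsPSpace (X × Y) := by
  rw [isPSpace_iff_countableInterFilter_nhds] at hX hY ⊢
  rintro ⟨x, y⟩
  have := hX x
  have := hY y
  rw [nhds_prod_eq]
  infer_instance

end

theorem stmt19 :
    (∀ (X Y : Type u) [TopologicalSpace X] [TopologicalSpace Y],
      IsPSpace X → IsPSpace Y → WellOrderableNhdsBases X → IsPSpace (X × Y)) ∧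
    (∀ (X Y : Type u) [TopologicalSpace X] [TopologicalSpace Y],
      FirstCountableTopology X → IsPSpace X → IsPSpace Y → IsPSpace (X × Y)) :=
  ⟨fun _ _ _ _ hX hY _ => hX.prod hY, fun _ _ _ _ _ hX hY => hX.prod hY⟩
end
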